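/- Let σ₁ < σ₂ be real numbers, let q : ℝ → ℝ, and let ψ : ℝ → ℝ be three times differentiable on (σ₁,σ₂) with ψ'(t) > 0 for all t ∈ (σ₁,σ₂). If ψ' satisfies Kummer's equation relative to q on (σ₁,σ₂), then the function u(t) = cos(ψ(t))/√(ψ'(t)) satisfies u''(t) + q(t)·u(t) = 0 for all t ∈ (σ₁,σ₂). -/

import Mathlib

/-!
Write `p = ψ'` and `w = p^(-1/2)`, so that the function in question is `u = w cos ψ`. The product
rule gives `u'' = (w'' - p² w) cos ψ - (2 p w' + p' w) sin ψ`; the sine term vanishes because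
`p w²` is constant, and a direct computation gives `w'' = w (-(1/2) p''/p + (3/4) (p'/p)²)`, which
Kummer's equation turns into `(p² - q) w`.
-/

open Real Set Filter Topology

theorem hasDerivAt_deriv_mul_cos_comp {w w' ψ p : ℝ → ℝ} {w'' p' t : ℝ}
    (hψ : ∀ᶠ s in 𝓝 t, HasDerivAt ψ (p s) s) (hw : ∀ᶠ s in 𝓝 t, HasDerivAt w (w' s) s)
    (hp : HasDerivAt p p' t) (hw' : HasDerivAt w' w'' t) :
    HasDerivAt (deriv fun s => w s * cos (ψ s))
      ((w'' - p t ^ 2 * w t) * cos (ψ t) - (2 * p t * w' t + p' * w t) * sin (ψ t)) t := by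
  have hderiv : deriv (fun s => w s * cos (ψ s)) =ᶠ[𝓝 t]
      fun s => w' s * cos (ψ s) - w s * (sin (ψ s) * p s) := by
    filter_upwards [hψ, hw] with s hψs hws
    rw [(hws.fun_mul hψs.cos).deriv]
    ring
  have hψt := hψ.self_of_nhds
  refine (((hw'.fun_mul hψt.cos).fun_sub
    (hw.self_of_nhds.fun_mul (hψt.sin.fun_mul hp))).congr_deriv ?_).congr_of_eventuallyEq hderiv
  ring

theorem hasDerivAt_inv_sqrt {p : ℝ → ℝ} {p' t : ℝ} (hp : HasDerivAt p p' t) (hpos : 0 < p t) :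
    HasDerivAt (fun s => (√(p s))⁻¹) (-(p' / (2 * p t)) * (√(p t))⁻¹) t := by
  have hsqrt : 0 < √(p t) := sqrt_pos.2 hpos
  refine ((hp.sqrt hpos.ne').inv hsqrt.ne').congr_deriv ?_
  field_simp
  rw [sq_sqrt hpos.le]

theorem hasDerivAt_neg_div_mul_inv_sqrt {p dp : ℝ → ℝ} {p'' t : ℝ} (hp : HasDerivAt p (dp t) t)
    (hdp : HasDerivAt dp p'' t) (hpos : 0 < p t) :
    HasDerivAt (fun s => -(dp s / (2 * p s)) * (√(p s))⁻¹)
      ((√(p t))⁻¹ * (-(1 / 2) * (p'' / p t) + (3 / 4) * (dp t / p t) ^ 2)) t := by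
  refine (((hdp.fun_div (hp.const_mul 2) (by positivity)).fun_neg).fun_mul
    (hasDerivAt_inv_sqrt hp hpos)).congr_deriv ?_
  field_simp
  ring

theorem kummer_implies_cos_solution (σ₁ σ₂ : ℝ) (q ψ : ℝ → ℝ)
    (hdiff : ∀ t ∈ Ioo σ₁ σ₂, DifferentiableAt ℝ ψ t ∧
      DifferentiableAt ℝ (deriv ψ) t ∧ DifferentiableAt ℝ (deriv (deriv ψ)) t)
    (hpos : ∀ t ∈ Ioo σ₁ σ₂, 0 < deriv ψ t)
    (hkummer : ∀ t ∈ Ioo σ₁ σ₂,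
      q t - (deriv ψ t) ^ 2 - (1 / 2) * (deriv (deriv (deriv ψ)) t / deriv ψ t)
        + (3 / 4) * (deriv (deriv ψ) t / deriv ψ t) ^ 2 = 0) :
    ∀ t ∈ Ioo σ₁ σ₂,
      deriv (deriv (fun s => Real.cos (ψ s) / Real.sqrt (deriv ψ s))) t
        + q t * (Real.cos (ψ t) / Real.sqrt (deriv ψ t)) = 0 := by
  intro t ht
  have hnear : ∀ᶠ s in 𝓝 t, s ∈ Ioo σ₁ σ₂ := Ioo_mem_nhds ht.1 ht.2
  have hψ : ∀ᶠ s in 𝓝 t, HasDerivAt ψ (deriv ψ s) s :=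
    hnear.mono fun s hs => (hdiff s hs).1.hasDerivAt
  have hw : ∀ᶠ s in 𝓝 t, HasDerivAt (fun s => (√(deriv ψ s))⁻¹)
      (-(deriv (deriv ψ) s / (2 * deriv ψ s)) * (√(deriv ψ s))⁻¹) s :=
    hnear.mono fun s hs => hasDerivAt_inv_sqrt (hdiff s hs).2.1.hasDerivAt (hpos s hs)
  have hp := (hdiff t ht).2.1.hasDerivAt
  have hw' := hasDerivAt_neg_div_mul_inv_sqrt hp (hdiff t ht).2.2.hasDerivAt (hpos t ht)
  have hu : (fun s => cos (ψ s) / √(deriv ψ s)) = fun s => (√(deriv ψ s))⁻¹ * cos (ψ s) := by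
    simp only [div_eq_inv_mul]
  rw [hu, (hasDerivAt_deriv_mul_cos_comp hψ hw hp hw').deriv]
  have hsin : 2 * deriv ψ t * (-(deriv (deriv ψ) t / (2 * deriv ψ t)) * (√(deriv ψ t))⁻¹)
      + deriv (deriv ψ) t * (√(deriv ψ t))⁻¹ = 0 := by
    field_simp [(hpos t ht).ne']
    ring
  rw [hsin]
  linear_combination (√(deriv ψ t))⁻¹ * cos (ψ t) * hkummer t ht
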